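/- arXiv:2510.22365 — 5 statements merged into one kernel-verified Lean document; each statement's English description precedes it below -/
import Mathlib

section
/- Let n ≥ 1 and let S_1,...,S_n be a partition of the complete twisted graph T_{2n} into plane spanning trees, with v_1w_1 ∈ E(S_1). Then S_1 is a balanced double star with center edge v_1w_1: every vertex other than v_1, w_1 is adjacent in S_1 to exactly one of v_1, w_1, the vertices other than v_1,w_1 form an independent set in S_1, and deg_{S_1}(v_1) = deg_{S_1}(w_1) = n. -/
open SimpleGraph

/-- Two edges of the complete twisted graph cross: writing the edges as `{a,b}` and
`{c,d}` with `a < b` and `c < d` in the linear vertex order, they cross iff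
`a < c < d < b` or `c < a < b < d`. -/
def Cross {m : ℕ} (e f : Sym2 (Fin m)) : Prop :=
  ∃ a b c d : Fin m, a < b ∧ c < d ∧ e = s(a, b) ∧ f = s(c, d) ∧
    ((a < c ∧ d < b) ∨ (c < a ∧ b < d))

/-- A subgraph of the twisted graph is plane if no two of its edges cross. -/
def IsPlane {m : ℕ} (G : SimpleGraph (Fin m)) : Prop :=
  ∀ e ∈ G.edgeSet, ∀ f ∈ G.edgeSet, ¬ Cross e f

/-- A partition of the complete twisted graph `T_{2n}` into plane spanning trees:
`n` plane spanning trees such that every edge of the complete graph lies in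
exactly one of them. -/
def IsTwistedPartition {n : ℕ} (S : Fin n → SimpleGraph (Fin (2 * n))) : Prop :=
  (∀ i, (S i).IsTree ∧ IsPlane (S i)) ∧
    ∀ u v : Fin (2 * n), u ≠ v → ∃! i, (S i).Adj u v

/-- The vertex `v_i` (1-indexed) of `T_{2n}`, i.e. vertex number `i - 1` in the
linear order `v_1 < v_2 < ... < v_n < w_n < ... < w_1`. -/
def vv (n : ℕ) (hn : 0 < n) (i : ℕ) : Fin (2 * n) :=
  ⟨(i - 1) % (2 * n), Nat.mod_lt _ (by omega)⟩

/-- The vertex `w_i` (1-indexed) of `T_{2n}`, i.e. vertex number `2n - i` in the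
linear order `v_1 < v_2 < ... < v_n < w_n < ... < w_1`. -/
def ww (n : ℕ) (hn : 0 < n) (i : ℕ) : Fin (2 * n) :=
  ⟨(2 * n - i) % (2 * n), Nat.mod_lt _ (by omega)⟩

/-!
Since `v₁` and `w₁` are the first and last vertices, every edge avoiding both is nested inside
`v₁w₁` and so crosses it. Hence in the plane tree `S₁` every other vertex is a leaf hanging from
`v₁` or from `w₁`, not from both since a tree has no triangle, which gives
`deg v₁ + deg w₁ = 2n`. Conversely a vertex has a neighbour in each of the `n` spanning trees
and its `2n - 1` incident edges are split among them, so its degree in any one tree is at most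
`2n - 1 - (n - 1) = n`.
-/

namespace IsPlane

variable {m : ℕ} {G : SimpleGraph (Fin m)}

theorem not_adj_of_nested (hG : IsPlane G) {a b u u' : Fin m} (hab : G.Adj a b)
    (hu : a < u ∧ u < b) (hu' : a < u' ∧ u' < b) : ¬ G.Adj u u' := by
  intro huu'
  have hcross : ∀ {c d}, c < d → G.Adj c d → a < c → d < b → False := fun hcd hadj hc hd =>
    hG s(a, b) hab s(_, _) hadj ⟨a, b, _, _, hu.1.trans hu.2, hcd, rfl, rfl, Or.inl ⟨hc, hd⟩⟩
  rcases lt_trichotomy u u' with hlt | rfl | hgt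
  · exact hcross hlt huu' hu.1 hu'.2
  · exact huu'.ne rfl
  · exact hcross hgt huu'.symm hu'.1 hu.2

end IsPlane

namespace SimpleGraph

variable {V : Type*} {G : SimpleGraph V}

theorem IsAcyclic.not_adj_of_adj_of_adj (hG : G.IsAcyclic) {a b u : V} (hab : G.Adj a b)
    (hua : G.Adj u a) : ¬ G.Adj u b := fun hub => by
  classical
  exact hG.cliqueFree le_rfl {a, b, u} (is3Clique_triple_iff.mpr ⟨hab, hua.symm, hub.symm⟩)

section DoubleStar

variable (hG : G.IsTree) {a b : V} (hab : G.Adj a b)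
  (hleaves : ∀ u u', u ≠ a → u ≠ b → u' ≠ a → u' ≠ b → ¬ G.Adj u u')
include hG hab hleaves

theorem IsTree.adj_left_iff_not_adj_right {u : V} (hua : u ≠ a) (hub : u ≠ b) :
    G.Adj u a ↔ ¬ G.Adj u b := by
  refine ⟨hG.isAcyclic.not_adj_of_adj_of_adj hab, fun hnub => ?_⟩
  have : Nontrivial V := ⟨⟨a, b, hab.ne⟩⟩
  obtain ⟨y, huy⟩ := hG.connected.preconnected.exists_adj_of_nontrivial u
  by_cases hya : y = a
  · exact hya ▸ huy
  by_cases hyb : y = b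
  · exact absurd (hyb ▸ huy) hnub
  · exact absurd huy (hleaves u y hua hub hya hyb)

theorem IsTree.ncard_neighborSet_add_ncard_neighborSet [Finite V] :
    (G.neighborSet a).ncard + (G.neighborSet b).ncard = Nat.card V := by
  have hpart : (G.neighborSet a \ {b}) ∪ (G.neighborSet b \ {a}) = {a, b}ᶜ := by
    ext u
    simp only [Set.mem_union, Set.mem_sdiff, mem_neighborSet, Set.mem_singleton_iff,
      Set.mem_compl_iff, Set.mem_insert_iff, not_or]
    refine ⟨?_, fun ⟨hua, hub⟩ => ?_⟩
    · rintro (⟨hau, hub⟩ | ⟨hbu, hua⟩)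
      exacts [⟨hau.ne', hub⟩, ⟨hua, hbu.ne'⟩]
    · by_cases hua' : G.Adj u a
      · exact Or.inl ⟨hua'.symm, hub⟩
      · have hub' := (hG.adj_left_iff_not_adj_right hab hleaves hua hub).not_left.mp hua'
        exact Or.inr ⟨hub'.symm, hua⟩
  have hdisj : Disjoint (G.neighborSet a \ {b}) (G.neighborSet b \ {a}) :=
    Set.disjoint_left.mpr fun u ⟨hau, hub⟩ ⟨hbu, hua⟩ =>
      hG.isAcyclic.not_adj_of_adj_of_adj hab hau.symm hbu.symm
  have hcard := Set.ncard_union_eq hdisj (Set.toFinite _) (Set.toFinite _)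
  rw [hpart, Set.ncard_sdiff_singleton_of_mem (show b ∈ G.neighborSet a from hab),
    Set.ncard_sdiff_singleton_of_mem (show a ∈ G.neighborSet b from hab.symm)] at hcard
  have := Set.ncard_add_ncard_compl ({a, b} : Set V)
  rw [Set.ncard_pair hab.ne] at this
  have : 0 < (G.neighborSet a).ncard := (Set.ncard_pos (Set.toFinite _)).mpr ⟨b, hab⟩
  have : 0 < (G.neighborSet b).ncard := (Set.ncard_pos (Set.toFinite _)).mpr ⟨a, hab.symm⟩
  omega

end DoubleStar

section EdgePartition

variable {ι V : Type*} [Fintype ι] [Finite V] {S : ι → SimpleGraph V}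
  (hS : ∀ u v, u ≠ v → ∃! i, (S i).Adj u v)
include hS

theorem sum_ncard_neighborSet_of_existsUnique_adj (x : V) :
    ∑ i, ((S i).neighborSet x).ncard = Nat.card V - 1 := by
  have hunion : ⋃ i, (S i).neighborSet x = {x}ᶜ := by
    ext u
    simp only [Set.mem_iUnion, mem_neighborSet, Set.mem_compl_iff, Set.mem_singleton_iff]
    exact ⟨fun ⟨_, hxu⟩ => hxu.ne', fun hux => (hS x u (Ne.symm hux)).exists⟩
  have hdisj : Pairwise fun i j => Disjoint ((S i).neighborSet x) ((S j).neighborSet x) :=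
    fun i j hij => Set.disjoint_left.mpr fun u (hi : (S i).Adj x u) (hj : (S j).Adj x u) =>
      hij ((hS x u hi.ne).unique hi hj)
  rw [← finsum_eq_sum_of_fintype, ← Set.ncard_iUnion_of_finite (fun _ => Set.toFinite _) hdisj,
    hunion]
  have := Set.ncard_add_ncard_compl ({x} : Set V)
  rw [Set.ncard_singleton] at this
  omega

theorem ncard_neighborSet_add_card_le_of_existsUnique_adj {x : V}
    (hx : ∀ i, ∃ y, (S i).Adj x y) (i : ι) :
    ((S i).neighborSet x).ncard + Fintype.card ι ≤ Nat.card V := by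
  classical
  have hsum := sum_ncard_neighborSet_of_existsUnique_adj hS x
  rw [← Finset.add_sum_erase _ _ (Finset.mem_univ i)] at hsum
  have hothers := Finset.card_nsmul_le_sum (Finset.univ.erase i)
    (fun j => ((S j).neighborSet x).ncard) 1 fun j _ => (Set.ncard_pos (Set.toFinite _)).mpr (hx j)
  rw [Finset.card_erase_of_mem (Finset.mem_univ i), Finset.card_univ, smul_eq_mul, mul_one]
    at hothers
  have : 0 < Fintype.card ι := Fintype.card_pos_iff.mpr ⟨i⟩
  have : Nonempty V := ⟨x⟩
  have : 0 < Nat.card V := Nat.card_pos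
  omega

end EdgePartition

end SimpleGraph

/-- In any partition of `T_{2n}` into plane spanning trees, the tree `S_1` containing
the edge `v_1 w_1` is a balanced double star with center edge `v_1 w_1`. -/
theorem first_tree_is_balanced_double_star
    (n : ℕ) (hn : 0 < n) (S : Fin n → SimpleGraph (Fin (2 * n)))
    (hS : IsTwistedPartition S)
    (h1 : (S ⟨0, hn⟩).Adj (vv n hn 1) (ww n hn 1)) :
    (∀ u : Fin (2 * n), u ≠ vv n hn 1 → u ≠ ww n hn 1 →
      ((S ⟨0, hn⟩).Adj u (vv n hn 1) ↔ ¬ (S ⟨0, hn⟩).Adj u (ww n hn 1))) ∧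
    (∀ u u' : Fin (2 * n), u ≠ vv n hn 1 → u ≠ ww n hn 1 →
      u' ≠ vv n hn 1 → u' ≠ ww n hn 1 → ¬ (S ⟨0, hn⟩).Adj u u') ∧
    ((S ⟨0, hn⟩).neighborSet (vv n hn 1)).ncard = n ∧
    ((S ⟨0, hn⟩).neighborSet (ww n hn 1)).ncard = n := by
  obtain ⟨htree, huniq⟩ := hS
  have hinner : ∀ u, u ≠ vv n hn 1 → u ≠ ww n hn 1 → vv n hn 1 < u ∧ u < ww n hn 1 := by
    intro u hv hw
    simp only [ne_eq, Fin.ext_iff, Fin.lt_def, vv, ww, Nat.sub_self, Nat.zero_mod,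
      Nat.mod_eq_of_lt (by omega : 2 * n - 1 < 2 * n)] at hv hw ⊢
    omega
  have hleaves : ∀ u u', u ≠ vv n hn 1 → u ≠ ww n hn 1 → u' ≠ vv n hn 1 → u' ≠ ww n hn 1 →
      ¬ (S ⟨0, hn⟩).Adj u u' := fun u u' hv hw hv' hw' =>
    (htree _).2.not_adj_of_nested h1 (hinner u hv hw) (hinner u' hv' hw')
  have : Nontrivial (Fin (2 * n)) := Fin.nontrivial_iff_two_le.mpr (by omega)
  have hdeg : ∀ x, ((S ⟨0, hn⟩).neighborSet x).ncard + n ≤ 2 * n := fun x => by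
    simpa using ncard_neighborSet_add_card_le_of_existsUnique_adj huniq
      (fun i => (htree i).1.connected.preconnected.exists_adj_of_nontrivial x) ⟨0, hn⟩
  have hsum := (htree _).1.ncard_neighborSet_add_ncard_neighborSet h1 hleaves
  rw [Nat.card_eq_fintype_card, Fintype.card_fin] at hsum
  have := hdeg (vv n hn 1)
  have := hdeg (ww n hn 1)
  refine ⟨fun u hv hw => (htree _).1.adj_left_iff_not_adj_right h1 hleaves hv hw, hleaves, ?_, ?_⟩
    <;> omega
end

section
/- Let n ≥ 2 and let S_1,...,S_n be a partition of T_{2n} into plane spanning trees with v_iw_i ∈ E(S_i) for each i. Then for each i ∈ {2,...,n}, vertices v_1 and w_1 are leaves of S_i (have degree 1 in S_i), and the trees S_2 − {v_1,w_1}, ..., S_n − {v_1,w_1} form a partition of the complete twisted graph on the vertices v_2,...,v_n,w_n,...,w_2 into plane spanning trees. -/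
open SimpleGraph

/-! The edge `v₁w₁` of `S₁` joins the first and the last vertex of the twisted order, so
every edge of `S₁` avoiding `v₁` and `w₁` would cross it: `S₁` is a double star centred at `v₁`
and `w₁`, hence `deg_{S₁} v₁ + deg_{S₁} w₁ ≥ 2n`. Since the trees partition the edges of
`T_{2n}`, the degrees of a vertex summed over all `n` trees equal `2n - 1`, and every degree is at
least `1`; this leaves exactly degree `1` for `v₁` and `w₁` in each of the other trees. Deleting
leaves keeps a tree a tree, and the edges avoiding `v₁, w₁` are exactly those not in `S₁`. -/

namespace SimpleGraph

variable {V : Type*} {G : SimpleGraph V}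

theorem ncard_neighborSet_eq_degree (v : V) [Fintype (G.neighborSet v)] :
    (G.neighborSet v).ncard = G.degree v := by
  rw [← card_neighborSet_eq_degree, Set.fintypeCard_eq_ncard]

theorem IsTree.induce_of_subsingleton_neighborSet (hG : G.IsTree) {s : Set V} (hs : s.Nonempty)
    (hleaf : ∀ v ∉ s, (G.neighborSet v).Subsingleton) : (G.induce s).IsTree :=
  have := hs.to_subtype
  ⟨⟨hG.connected.preconnected.induce_of_degree_eq_one hleaf⟩, hG.isAcyclic.induce s⟩

theorem Connected.card_le_degree_add_degree [Fintype V] [DecidableRel G.Adj] (hG : G.Connected)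
    {v w : V} (hvw : G.Adj v w) (hstar : ∀ ⦃a b⦄, G.Adj a b → a ≠ v → a ≠ w → b = v ∨ b = w) :
    Fintype.card V ≤ G.degree v + G.degree w := by
  classical
  have : Nontrivial V := ⟨⟨v, w, hvw.ne⟩⟩
  have hcover : Finset.univ ⊆ G.neighborFinset v ∪ G.neighborFinset w := by
    intro u _
    simp only [Finset.mem_union, mem_neighborFinset]
    by_cases huv : u = v
    · exact Or.inr (huv ▸ hvw.symm)
    by_cases huw : u = w
    · exact Or.inl (huw ▸ hvw)
    obtain ⟨z, hz⟩ := (G.degree_pos_iff_exists_adj u).1 (hG.preconnected.degree_pos_of_nontrivial u)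
    rcases hstar hz huv huw with rfl | rfl
    exacts [Or.inl hz.symm, Or.inr hz.symm]
  calc Fintype.card V = Finset.univ.card := Finset.card_univ.symm
    _ ≤ (G.neighborFinset v ∪ G.neighborFinset w).card := Finset.card_le_card hcover
    _ ≤ G.degree v + G.degree w := Finset.card_union_le _ _

def IsEdgePartition {ι : Type*} (S : ι → SimpleGraph V) : Prop :=
  ∀ u v : V, u ≠ v → ∃! i, (S i).Adj u v

namespace IsEdgePartition

variable {ι : Type*} [Fintype V] [Fintype ι] {S : ι → SimpleGraph V} [∀ i, DecidableRel (S i).Adj]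

theorem sum_degree (hS : IsEdgePartition S) (x : V) :
    ∑ i, (S i).degree x = Fintype.card V - 1 := by
  classical
  have hdisj :
      ((Finset.univ : Finset ι) : Set ι).PairwiseDisjoint fun i ↦ (S i).neighborFinset x := by
    intro i _ j _ hij
    refine Finset.disjoint_left.2 fun u hi hj ↦ hij ?_
    rw [mem_neighborFinset] at hi hj
    exact (hS x u hi.ne).unique hi hj
  have hunion : Finset.univ.biUnion (fun i ↦ (S i).neighborFinset x) = Finset.univ.erase x := by
    ext u
    simp only [Finset.mem_biUnion, Finset.mem_univ, true_and, mem_neighborFinset,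
      Finset.mem_erase, and_true]
    exact ⟨fun ⟨i, hi⟩ ↦ hi.ne', fun hux ↦ (hS x u (Ne.symm hux)).exists⟩
  simp_rw [← card_neighborFinset_eq_degree]
  rw [← Finset.card_biUnion hdisj, hunion, Finset.card_erase_of_mem (Finset.mem_univ x),
    Finset.card_univ]

theorem degree_eq_one_of_card_le_degree_add_degree [DecidableEq ι] (hS : IsEdgePartition S)
    (hconn : ∀ i, (S i).Connected) (hcard : Fintype.card V = 2 * Fintype.card ι) {v w : V}
    (hvw : v ≠ w) {i₀ : ι} (h₀ : Fintype.card V ≤ (S i₀).degree v + (S i₀).degree w) {i : ι}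
    (hi : i ≠ i₀) : (S i).degree v = 1 ∧ (S i).degree w = 1 := by
  have : Nontrivial V := ⟨⟨v, w, hvw⟩⟩
  have hpos : ∀ j x, 0 < (S j).degree x :=
    fun j x ↦ (hconn j).preconnected.degree_pos_of_nontrivial x
  set d : ι → ℕ := fun j ↦ (S j).degree v + (S j).degree w
  have hsum : ∑ j, d j = 2 * (Fintype.card V - 1) := by
    rw [Finset.sum_add_distrib, hS.sum_degree, hS.sum_degree, two_mul]
  have hsplit := Finset.add_sum_erase Finset.univ d (Finset.mem_univ i₀)
  have h₀ : Fintype.card V ≤ d i₀ := h₀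
  have hothers : ∑ j ∈ Finset.univ.erase i₀, d j = ∑ _j ∈ Finset.univ.erase i₀, 2 := by
    refine le_antisymm ?_ (Finset.sum_le_sum fun j _ ↦ Nat.add_le_add (hpos j v) (hpos j w))
    rw [Finset.sum_const, Finset.card_erase_of_mem (Finset.mem_univ i₀), Finset.card_univ,
      smul_eq_mul]
    have : 0 < Fintype.card ι := Fintype.card_pos_iff.2 ⟨i₀⟩
    omega
  have hdi := (Finset.sum_eq_sum_iff_of_le fun j _ ↦ Nat.add_le_add (hpos j v) (hpos j w)).1
    hothers.symm i (Finset.mem_erase.2 ⟨hi, Finset.mem_univ i⟩)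
  have := hpos i v
  have := hpos i w
  omega

end IsEdgePartition

end SimpleGraph

theorem cross_of_lt_of_lt {m : ℕ} {a b c d : Fin m} (hac : a < c) (hcb : c < b) (had : a < d)
    (hdb : d < b) (hcd : c ≠ d) : Cross s(a, b) s(c, d) := by
  rcases hcd.lt_or_gt with hcd | hdc
  · exact ⟨a, b, c, d, hac.trans hcb, hcd, rfl, rfl, Or.inl ⟨hac, hdb⟩⟩
  · exact ⟨a, b, d, c, had.trans hdb, hdc, rfl, Sym2.eq_swap, Or.inl ⟨had, hcb⟩⟩

theorem IsPlane.not_adj_of_lt_of_lt {m : ℕ} {G : SimpleGraph (Fin m)} (hG : IsPlane G)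
    {a b c d : Fin m} (hab : G.Adj a b) (hac : a < c) (hcb : c < b) (had : a < d) (hdb : d < b) :
    ¬ G.Adj c d := fun hcd ↦ hG _ hab _ hcd (cross_of_lt_of_lt hac hcb had hdb hcd.ne)

theorem vv_one_val (n : ℕ) (hn : 0 < n) : (vv n hn 1).val = 0 := by
  simp [vv]

theorem ww_one_val (n : ℕ) (hn : 0 < n) : (ww n hn 1).val = 2 * n - 1 :=
  Nat.mod_eq_of_lt (by omega)

theorem vv_one_lt_of_ne {n : ℕ} {hn : 0 < n} {u : Fin (2 * n)} (hu : u ≠ vv n hn 1) :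
    vv n hn 1 < u := by
  rw [Fin.lt_def, vv_one_val]
  exact Nat.pos_of_ne_zero fun h ↦ hu (Fin.ext (by rw [h, vv_one_val]))

theorem lt_ww_one_of_ne {n : ℕ} {hn : 0 < n} {u : Fin (2 * n)} (hu : u ≠ ww n hn 1) :
    u < ww n hn 1 := by
  rw [Fin.lt_def, ww_one_val]
  have := u.isLt
  exact lt_of_le_of_ne (by omega) fun h ↦ hu (Fin.ext (by rw [h, ww_one_val]))

theorem IsPlane.eq_vv_one_or_eq_ww_one_of_adj {n : ℕ} {hn : 0 < n}
    {G : SimpleGraph (Fin (2 * n))} (hG : IsPlane G) (hvw : G.Adj (vv n hn 1) (ww n hn 1))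
    {a b : Fin (2 * n)} (hab : G.Adj a b) (hav : a ≠ vv n hn 1) (haw : a ≠ ww n hn 1) :
    b = vv n hn 1 ∨ b = ww n hn 1 := by
  by_contra! hb
  exact hG.not_adj_of_lt_of_lt hvw (vv_one_lt_of_ne hav) (lt_ww_one_of_ne haw)
    (vv_one_lt_of_ne hb.1) (lt_ww_one_of_ne hb.2) hab

theorem delete_v1_w1_gives_partition_general
    (n : ℕ) (hn : 0 < n) (S : Fin n → SimpleGraph (Fin (2 * n)))
    (hS : IsTwistedPartition S)
    (hc : ∀ i : Fin n, (S i).Adj (vv n hn (i.1 + 1)) (ww n hn (i.1 + 1))) :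
    (∀ i : Fin n, 1 ≤ i.1 →
      ((S i).neighborSet (vv n hn 1)).ncard = 1 ∧
      ((S i).neighborSet (ww n hn 1)).ncard = 1) ∧
    (∀ i : Fin n, 1 ≤ i.1 →
      ((S i).induce {u : Fin (2 * n) | u ≠ vv n hn 1 ∧ u ≠ ww n hn 1}).IsTree) ∧
    (∀ i : Fin n, 1 ≤ i.1 → ∀ a b c d : Fin (2 * n),
      a ≠ vv n hn 1 → a ≠ ww n hn 1 → b ≠ vv n hn 1 → b ≠ ww n hn 1 →
      c ≠ vv n hn 1 → c ≠ ww n hn 1 → d ≠ vv n hn 1 → d ≠ ww n hn 1 →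
      (S i).Adj a b → (S i).Adj c d → ¬ Cross s(a, b) s(c, d)) ∧
    (∀ u v : Fin (2 * n),
      u ≠ vv n hn 1 → u ≠ ww n hn 1 → v ≠ vv n hn 1 → v ≠ ww n hn 1 → u ≠ v →
      ∃! i : Fin n, 1 ≤ i.1 ∧ (S i).Adj u v) := by
  classical
  obtain ⟨hS, hpart : IsEdgePartition S⟩ := hS
  set v := vv n hn 1
  set w := ww n hn 1
  let i₀ : Fin n := ⟨0, hn⟩
  have hvw : (S i₀).Adj v w := hc i₀
  have hstar : ∀ ⦃a b⦄, (S i₀).Adj a b → a ≠ v → a ≠ w → b = v ∨ b = w :=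
    fun _ _ ↦ (hS i₀).2.eq_vv_one_or_eq_ww_one_of_adj hvw
  have hne : ∀ i : Fin n, 1 ≤ i.1 → i ≠ i₀ := fun i hi h ↦ by simp [h, i₀] at hi
  have hleaf : ∀ i : Fin n, 1 ≤ i.1 →
      ((S i).neighborSet v).ncard = 1 ∧ ((S i).neighborSet w).ncard = 1 := fun i hi ↦ by
    simp only [ncard_neighborSet_eq_degree]
    refine hpart.degree_eq_one_of_card_le_degree_add_degree (fun j ↦ (hS j).1.connected)
      (by simp) hvw.ne ((hS i₀).1.connected.card_le_degree_add_degree hvw hstar) (hne i hi)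
  refine ⟨hleaf, fun i hi ↦ ?_, fun i _ a b c d _ _ _ _ _ _ _ _ hab hcd ↦ (hS i).2 _ hab _ hcd, ?_⟩
  · refine (hS i).1.induce_of_subsingleton_neighborSet ⟨⟨1, by omega⟩, ?_, ?_⟩ fun x hx ↦ ?_
    · simp [Fin.ext_iff, v, vv_one_val]
    · simp only [ne_eq, Fin.ext_iff, w, ww_one_val]
      omega
    obtain rfl | rfl : x = v ∨ x = w := by
      simpa only [Set.mem_ofPred_eq, not_and_or, not_not] using hx
    exacts [Set.ncard_le_one_iff_subsingleton.1 (hleaf i hi).1.le,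
      Set.ncard_le_one_iff_subsingleton.1 (hleaf i hi).2.le]
  · intro a b hav haw hbv hbw hab
    obtain ⟨i, hi, huniq⟩ := hpart a b hab
    have hi₀ : i ≠ i₀ := by
      rintro rfl
      rcases hstar hi hav haw with rfl | rfl <;> contradiction
    exact ⟨i, ⟨Nat.one_le_iff_ne_zero.2 fun h ↦ hi₀ (Fin.ext h), hi⟩, fun j hj ↦ huniq j hj.2⟩

/-- In any partition of `T_{2n}` into plane spanning trees with `v_i w_i ∈ E(S_i)`,
the vertices `v_1, w_1` are leaves of every `S_i` with `i ≥ 2`, and the trees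
`S_2 - {v_1, w_1}, ..., S_n - {v_1, w_1}` form a partition of the complete twisted
graph on `v_2, ..., v_n, w_n, ..., w_2` into plane spanning trees. -/
theorem delete_v1_w1_gives_partition
    (n : ℕ) (hn : 0 < n) (hn2 : 2 ≤ n) (S : Fin n → SimpleGraph (Fin (2 * n)))
    (hS : IsTwistedPartition S)
    (hc : ∀ i : Fin n, (S i).Adj (vv n hn (i.1 + 1)) (ww n hn (i.1 + 1))) :
    (∀ i : Fin n, 1 ≤ i.1 →
      ((S i).neighborSet (vv n hn 1)).ncard = 1 ∧
      ((S i).neighborSet (ww n hn 1)).ncard = 1) ∧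
    (∀ i : Fin n, 1 ≤ i.1 →
      ((S i).induce {u : Fin (2 * n) | u ≠ vv n hn 1 ∧ u ≠ ww n hn 1}).IsTree) ∧
    (∀ i : Fin n, 1 ≤ i.1 → ∀ a b c d : Fin (2 * n),
      a ≠ vv n hn 1 → a ≠ ww n hn 1 → b ≠ vv n hn 1 → b ≠ ww n hn 1 →
      c ≠ vv n hn 1 → c ≠ ww n hn 1 → d ≠ vv n hn 1 → d ≠ ww n hn 1 →
      (S i).Adj a b → (S i).Adj c d → ¬ Cross s(a, b) s(c, d)) ∧
    (∀ u v : Fin (2 * n),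
      u ≠ vv n hn 1 → u ≠ ww n hn 1 → v ≠ vv n hn 1 → v ≠ ww n hn 1 → u ≠ v →
      ∃! i : Fin n, 1 ≤ i.1 ∧ (S i).Adj u v) :=
  delete_v1_w1_gives_partition_general n hn S hS hc
end

section
/- Let n ≥ 2 and let S_1,...,S_n be a partition of T_{2n} into plane spanning trees with v_iw_i ∈ E(S_i). Then the n edges v_1v_2, v_1v_3, ..., v_1v_n, v_1w_n lie in n pairwise distinct trees of the partition, and likewise the n edges w_1w_2, ..., w_1w_n, w_1v_n lie in n pairwise distinct trees. -/
/-!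
Write `I_j` for the block `v_{j+1}, …, v_n, w_n, …, w_{j+1}`. As crossing means nesting, an edge
inside `I_j` cannot lie in a tree `S_i` with `i < j`: it would be nested in the edge
`v_{i+1} w_{i+1}` of `S_i`. Hence the `n - j` forests `S_i[I_j]`, `i ≥ j`, partition the
`(n - j)(2(n - j) - 1)` edges of `K_{I_j}`, so they are spanning trees. For `i > j` this gives
`v_{j+1}` a neighbour in `S_i[I_j]`, and at most one among `v_{j+2}, …, v_n, w_n`, because these
lie in the connected `S_i[I_{j+1}]` and `S_i` has no cycle. Counting the `n - j` edges from
`v_{j+1}` to `v_{j+2}, …, v_n, w_n` then puts one of them into `S_j`, and by descending induction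
on `j` (an edge of `S_i` from `v_{j+1}` beyond `w_n` would be nested over the edge of `S_i` at
`v_{j+2}`) every `S_i`, `i ≥ j`, contains one of them. For `j = 0` the `n` trees share the `n`
edges at `v_1`, one each; the statement about `w_1` is the mirror image under reversing the vertex
order.
-/

open SimpleGraph

open Finset

theorem Finset.sum_card_filter_eq_card_of_existsUnique {ι α : Type*} [Fintype ι] (t : Finset α)
    (p : ι → α → Prop) [∀ i a, Decidable (p i a)] (h : ∀ a ∈ t, ∃! i, p i a) :
    ∑ i, #{a ∈ t | p i a} = #t := by
  calc ∑ i, #{a ∈ t | p i a} = ∑ a ∈ t, #(bipartiteBelow p univ a) :=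
        sum_card_bipartiteAbove_eq_sum_card_bipartiteBelow p
    _ = ∑ a ∈ t, 1 := sum_congr rfl fun a ha =>
        card_eq_one_iff_existsUnique.2 (by simpa [bipartiteBelow] using h a ha)
    _ = #t := (card_eq_sum_ones t).symm

theorem Fin.card_filter_le_val_and_val_lt {m a b : ℕ} (hb : b ≤ m) :
    #{x : Fin m | a ≤ x.val ∧ x.val < b} = b - a := by
  rw [← card_map Fin.valEmbedding, ← Nat.card_Ico]
  congr 1
  ext k
  simp only [mem_map, mem_filter, mem_univ, true_and, Fin.valEmbedding_apply, mem_Ico]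
  exact ⟨fun ⟨x, hx, hxk⟩ => hxk ▸ hx, fun hk => ⟨⟨k, by omega⟩, hk, rfl⟩⟩

namespace SimpleGraph

variable {V : Type*} {G : SimpleGraph V}

lemma IsAcyclic.exists_isTree_ge [Nonempty V] (hG : G.IsAcyclic) : ∃ T, G ≤ T ∧ T.IsTree := by
  obtain ⟨T, hGT, -, hT⟩ := connected_top.exists_isTree_le_of_le_of_isAcyclic le_top hG
  exact ⟨T, hGT, hT⟩

lemma IsAcyclic.eq_of_adj_of_preconnected_induce (hG : G.IsAcyclic) {s : Set V}
    (hs : (G.induce s).Preconnected) {x u v : V} (hx : x ∉ s) (hu : u ∈ s) (hv : v ∈ s)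
    (hxu : G.Adj x u) (hxv : G.Adj x v) : v = u := by
  obtain ⟨q, hq⟩ := hs.exists_isPath ⟨u, hu⟩ ⟨v, hv⟩
  have hxq : x ∉ (q.map (Embedding.induce s).toHom).support := by
    simp only [Walk.support_map, List.mem_map, not_exists, not_and]
    exact fun y _ hy => hx (hy ▸ y.2)
  have := hG.eq_snd_of_adj_start ((hq.map Subtype.val_injective).cons hxq (h := hxu)) hxv
    (Walk.end_mem_support _)
  exact this.trans (Walk.snd_cons _ _)

/-- `K_{2m}` has `m (2m - 1)` edges and a forest on `2m` vertices at most `2m - 1`. -/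
theorem isTree_of_isAcyclic_of_card_eq_two_mul {ι : Type*} [Fintype ι] [Fintype V]
    (G : ι → SimpleGraph V) (hacyc : ∀ i, (G i).IsAcyclic)
    (hpart : ∀ u v, u ≠ v → ∃! i, (G i).Adj u v)
    (hcard : Fintype.card V = 2 * Fintype.card ι) (i : ι) : (G i).IsTree := by
  classical
  have : Nonempty V :=
    Fintype.card_pos_iff.1 (by have := Fintype.card_pos_iff.2 ⟨i⟩; omega)
  choose T hGT hT using fun i => (hacyc i).exists_isTree_ge
  have hle : ∀ i, #(G i).edgeFinset ≤ #(T i).edgeFinset := fun i =>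
    card_le_card (edgeFinset_mono (hGT i))
  have hsum : ∑ i, #(G i).edgeFinset = ∑ i, #(T i).edgeFinset := by
    calc ∑ i, #(G i).edgeFinset
          = ∑ i, #{e ∈ (⊤ : SimpleGraph V).edgeFinset | e ∈ (G i).edgeSet} := by
          congr! 2 with i
          ext e
          simp only [mem_filter, mem_edgeFinset]
          exact ⟨fun he => ⟨edgeSet_mono le_top he, he⟩, And.right⟩
      _ = #(⊤ : SimpleGraph V).edgeFinset := by
          refine sum_card_filter_eq_card_of_existsUnique _ _ fun e he => ?_
          induction e with
          | h u v => simpa using hpart u v (by simpa using he)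
      _ = ∑ i, #(T i).edgeFinset := by
          have hTcard : ∀ i, #(T i).edgeFinset = Fintype.card V - 1 := fun i => by
            have := (hT i).card_edgeFinset; omega
          rw [card_edgeFinset_top_eq_card_choose_two, Nat.choose_two_right,
            sum_congr rfl fun i _ => hTcard i, sum_const, card_univ, smul_eq_mul, hcard,
            mul_assoc, Nat.mul_div_cancel_left _ two_pos]
  have hGi := (sum_eq_sum_iff_of_le fun i _ => hle i).1 hsum i (mem_univ i)
  rw [edgeFinset_inj.1 (eq_of_subset_of_card_le (edgeFinset_mono (hGT i)) hGi.ge)]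
  exact hT i

end SimpleGraph

lemma IsPlane.not_nested {m : ℕ} {G : SimpleGraph (Fin m)} (hG : IsPlane G) {a b c d : Fin m}
    (hab : G.Adj a b) (hcd : G.Adj c d) (hac : a < c) (hcd' : c < d) (hdb : d < b) : False :=
  hG _ hab _ hcd ⟨a, b, c, d, by omega, hcd', rfl, rfl, Or.inl ⟨hac, hdb⟩⟩

lemma IsPlane.comap_rev {m : ℕ} {G : SimpleGraph (Fin m)} (hG : IsPlane G) :
    IsPlane (G.comap Fin.rev) := by
  rintro _ hab _ hcd ⟨a, b, c, d, hab', hcd', rfl, rfl, ⟨hac, hdb⟩ | ⟨hca, hbd⟩⟩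
  · exact hG.not_nested (G := G) hab.symm hcd.symm (Fin.rev_lt_rev.2 hdb)
      (Fin.rev_lt_rev.2 hcd') (Fin.rev_lt_rev.2 hac)
  · exact hG.not_nested (G := G) hcd.symm hab.symm (Fin.rev_lt_rev.2 hbd)
      (Fin.rev_lt_rev.2 hab') (Fin.rev_lt_rev.2 hca)

lemma IsTwistedPartition.comap_rev {n : ℕ} {S : Fin n → SimpleGraph (Fin (2 * n))}
    (hS : IsTwistedPartition S) : IsTwistedPartition fun k => (S k).comap Fin.rev :=
  ⟨fun k => ⟨(Iso.comap Fin.revPerm (S k)).isTree_iff.2 (hS.1 k).1, (hS.1 k).2.comap_rev⟩,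
    fun u v huv => hS.2 u.rev v.rev (Fin.rev_injective.ne huv)⟩

/-- `S k` contains the edge `v_{k+1} w_{k+1}`, where `w_{k+1} = x.rev` for `x = v_{k+1}`. -/
def HasSpine {n : ℕ} (S : Fin n → SimpleGraph (Fin (2 * n))) : Prop :=
  ∀ (k : Fin n) (x : Fin (2 * n)), x.val = k.val → (S k).Adj x x.rev

lemma HasSpine.comap_rev {n : ℕ} {S : Fin n → SimpleGraph (Fin (2 * n))} (hsp : HasSpine S) :
    HasSpine fun k => (S k).comap Fin.rev := fun k x hx => by
  simpa using (hsp k x hx).symm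

/-- The vertices `v_{j+1}, …, v_n, w_n, …, w_{j+1}`: a copy of `T_{2(n-j)}` inside `T_{2n}`. -/
def innerBlock (n j : ℕ) : Finset (Fin (2 * n)) := {x | j ≤ x.val ∧ x.val < 2 * n - j}

section Twisted

variable {n : ℕ} {S : Fin n → SimpleGraph (Fin (2 * n))}

open Classical

/-- An edge inside `innerBlock n j` is nested in the spine of every tree `S i` with `i < j`. -/
lemma le_of_adj_of_mem_innerBlock (hplane : ∀ i, IsPlane (S i)) (hsp : HasSpine S) {i : Fin n}
    {j : ℕ} {a b : Fin (2 * n)} (h : (S i).Adj a b) (ha : a ∈ innerBlock n j)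
    (hb : b ∈ innerBlock n j) : j ≤ i := by
  wlog hab : a < b generalizing a b
  · exact this h.symm hb ha (lt_of_le_of_ne (not_lt.1 hab) h.ne.symm)
  by_contra hij
  simp only [innerBlock, mem_filter, mem_univ, true_and] at ha hb
  obtain ⟨x, hx⟩ : ∃ x : Fin (2 * n), x.val = i := ⟨⟨i, by omega⟩, rfl⟩
  have hrev := Fin.val_rev x
  exact (hplane i).not_nested (hsp i x hx) h (by omega) hab (by omega)

theorem connected_induce_innerBlock (hS : IsTwistedPartition S) (hsp : HasSpine S) {j : ℕ}
    {k : Fin n} (hjk : j ≤ k) :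
    ((S k).induce (innerBlock n j : Set (Fin (2 * n)))).Connected := by
  refine (isTree_of_isAcyclic_of_card_eq_two_mul (ι := {i : Fin n // j ≤ i})
    (fun i => (S i).induce _) (fun i => (hS.1 i).1.isAcyclic.induce _) ?_ ?_ ⟨k, hjk⟩).connected
  · intro u v huv
    obtain ⟨i, hi, huniq⟩ := hS.2 u v (Subtype.val_injective.ne huv)
    exact ⟨⟨i, le_of_adj_of_mem_innerBlock (fun i => (hS.1 i).2) hsp hi u.2 v.2⟩, hi,
      fun i' hi' => Subtype.ext (huniq i' hi')⟩
  · simp only [Finset.coe_sort_coe, Fintype.card_coe]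
    rw [Fintype.card_subtype, innerBlock,
      Fin.card_filter_le_val_and_val_lt (by omega),
      filter_congr fun i _ => (and_iff_left i.isLt).symm, Fin.card_filter_le_val_and_val_lt le_rfl]
    omega

lemma exists_adj_of_val_lt (hS : IsTwistedPartition S) (hsp : HasSpine S) {k : Fin n}
    {x : Fin (2 * n)} (hxk : x.val < k) : ∃ u, x < u ∧ (S k).Adj x u := by
  have hrev := Fin.val_rev x
  have hx : x ∈ innerBlock n x := by
    simp only [innerBlock, mem_filter, mem_univ, true_and]; omega
  have hx' : x.rev ∈ innerBlock n x := by
    simp only [innerBlock, mem_filter, mem_univ, true_and]; omega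
  have : Nontrivial (innerBlock n x : Set (Fin (2 * n))) :=
    ⟨⟨x, hx⟩, ⟨x.rev, hx'⟩, fun h => by simp [Fin.ext_iff] at h; omega⟩
  obtain ⟨⟨u, hu⟩, hxu⟩ :=
    (connected_induce_innerBlock hS hsp hxk.le).preconnected.exists_adj_of_nontrivial ⟨x, hx⟩
  simp only [innerBlock, coe_filter, mem_univ, true_and, Set.mem_ofPred_eq] at hu
  exact ⟨u, lt_of_le_of_ne (Fin.le_def.2 hu.1) (fun h => hxu.ne (Subtype.ext h)), hxu⟩

theorem sum_card_filter_adj_eq (hS : IsTwistedPartition S) (x : Fin (2 * n)) :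
    ∑ i, #{u | x < u ∧ u.val ≤ n ∧ (S i).Adj x u} = n - x := by
  have := sum_card_filter_eq_card_of_existsUnique {u : Fin (2 * n) | x < u ∧ u.val ≤ n}
    (fun i u => (S i).Adj x u) fun u hu => hS.2 x u (mem_filter.1 hu).2.1.ne
  simp only [filter_filter, and_assoc] at this
  have hA : #{u : Fin (2 * n) | x < u ∧ u.val ≤ n} =
      #{u : Fin (2 * n) | x.val + 1 ≤ u.val ∧ u.val < n + 1} := by
    congr 1
    ext u
    simp only [mem_filter, mem_univ, true_and, Fin.lt_def]
    omega
  rw [this, hA, Fin.card_filter_le_val_and_val_lt (by have := x.isLt; omega)]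
  omega

lemma eq_of_adj_of_val_lt (hS : IsTwistedPartition S) (hsp : HasSpine S) {k : Fin n}
    {x u v : Fin (2 * n)} (hxk : x.val < k) (hxu : x < u) (hun : u.val ≤ n) (hxv : x < v)
    (hvn : v.val ≤ n) (hu : (S k).Adj x u) (hv : (S k).Adj x v) : v = u := by
  have hmem : ∀ {w : Fin (2 * n)}, x < w → w.val ≤ n → w ∈ innerBlock n (x + 1) := by
    intro w hxw hwn
    simp only [innerBlock, mem_filter, mem_univ, true_and]
    omega
  exact (hS.1 k).1.isAcyclic.eq_of_adj_of_preconnected_induce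
    (connected_induce_innerBlock hS hsp hxk).preconnected (by simp [innerBlock])
    (hmem hxu hun) (hmem hxv hvn) hu hv

/-- The `n - k` edges from `x = v_{k+1}` to `v_{k+2}, …, v_n, w_n` lie in trees `S i` with
`k ≤ i`, and each `S i` with `k < i` contains at most one of them, so `S k` contains one. -/
lemma exists_adj_of_val_eq (hS : IsTwistedPartition S) (hsp : HasSpine S) {k : Fin n}
    {x : Fin (2 * n)} (hxk : x.val = k) : ∃ u, x < u ∧ u.val ≤ n ∧ (S k).Adj x u := by
  by_contra hno
  have hle : ∀ i, #{u | x < u ∧ u.val ≤ n ∧ (S i).Adj x u} ≤ if k < i then 1 else 0 := by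
    intro i
    split_ifs with hki
    · refine card_le_one.2 fun u hu v hv => ?_
      simp only [mem_filter, mem_univ, true_and] at hu hv
      exact eq_of_adj_of_val_lt hS hsp (by omega) hv.1 hv.2.1 hu.1 hu.2.1 hv.2.2 hu.2.2
    · refine Nat.le_zero.2 <| card_eq_zero.2 <|
        filter_eq_empty_iff.2 fun u _ ⟨hxu, hun, hadj⟩ => ?_
      have hmem : ∀ {w : Fin (2 * n)}, x ≤ w → w.val ≤ n → w ∈ innerBlock n k := by
        intro w hxw hwn
        simp only [innerBlock, mem_filter, mem_univ, true_and]
        omega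
      have hki' := le_of_adj_of_mem_innerBlock (fun i => (hS.1 i).2) hsp hadj
        (hmem le_rfl (by omega)) (hmem hxu.le hun)
      exact hno ⟨u, hxu, hun, (show i = k by ext; omega) ▸ hadj⟩
  have hsum := (sum_card_filter_adj_eq hS x).symm.trans_le (sum_le_sum fun i _ => hle i)
  have hK : #{i : Fin n | k < i} = #{i : Fin n | k.val + 1 ≤ i.val ∧ i.val < n} := by
    congr 1
    ext i
    simp only [mem_filter, mem_univ, true_and, Fin.lt_def]
    omega
  rw [sum_boole, Nat.cast_id, hK, Fin.card_filter_le_val_and_val_lt le_rfl] at hsum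
  omega

theorem exists_adj_of_val_le (hS : IsTwistedPartition S) (hsp : HasSpine S) {k : Fin n}
    {x : Fin (2 * n)} (hxk : x.val ≤ k) : ∃ u, x < u ∧ u.val ≤ n ∧ (S k).Adj x u := by
  obtain ⟨d, hd⟩ := Nat.exists_eq_add_of_le hxk
  induction d generalizing x with
  | zero => exact exists_adj_of_val_eq hS hsp hd.symm
  | succ d ih =>
    obtain ⟨u, hxu, hadj⟩ := exists_adj_of_val_lt hS hsp (k := k) (x := x) (by omega)
    refine ⟨u, hxu, not_lt.1 fun hnu => ?_, hadj⟩
    -- otherwise the edge at `x + 1` provided by induction would be nested in `x u`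
    obtain ⟨y, hy⟩ : ∃ y : Fin (2 * n), y.val = x.val + 1 := ⟨⟨x + 1, by omega⟩, rfl⟩
    obtain ⟨a, hya, han, hadj'⟩ := ih (x := y) (by omega) (by omega)
    exact (hS.1 k).2.not_nested hadj hadj' (by omega) hya (by omega)

/-- Each of the `n` trees contains at least one of the `n` edges from `v_1` to
`v_2, …, v_n, w_n`, hence exactly one. -/
theorem existsUnique_adj_of_val_eq_zero (hS : IsTwistedPartition S) (hsp : HasSpine S)
    {x : Fin (2 * n)} (hx : x.val = 0) (k : Fin n) :
    ∃! u, x < u ∧ u.val ≤ n ∧ (S k).Adj x u := by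
  have hpos : ∀ i, 1 ≤ #{u | x < u ∧ u.val ≤ n ∧ (S i).Adj x u} := fun i => by
    obtain ⟨u, hu⟩ := exists_adj_of_val_le hS hsp (k := i) (x := x) (by omega)
    exact card_pos.2 ⟨u, by simpa using hu⟩
  have hk := (sum_eq_sum_iff_of_le fun i _ => hpos i).1
    (by simp [sum_card_filter_adj_eq hS x, hx]) k (mem_univ k)
  simpa using card_eq_one_iff_existsUnique.1 hk.symm

end Twisted

lemma val_vv {n : ℕ} (hn : 0 < n) {i : ℕ} (hi : 1 ≤ i) (hi' : i ≤ 2 * n) :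
    (vv n hn i).val = i - 1 :=
  Nat.mod_eq_of_lt (by omega)

lemma val_ww {n : ℕ} (hn : 0 < n) {i : ℕ} (hi : 1 ≤ i) (hi' : i ≤ 2 * n) :
    (ww n hn i).val = 2 * n - i :=
  Nat.mod_eq_of_lt (by omega)

lemma ww_eq_rev_vv {n : ℕ} (hn : 0 < n) {i : ℕ} (hi : 1 ≤ i) (hi' : i ≤ 2 * n) :
    ww n hn i = (vv n hn i).rev :=
  Fin.ext (by rw [val_ww hn hi hi', Fin.val_rev, val_vv hn hi hi']; omega)

section Vertices

variable {n : ℕ} {S : Fin n → SimpleGraph (Fin (2 * n))}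

lemma hasSpine_of_adj_vv_ww (hn : 0 < n)
    (hc : ∀ i : Fin n, (S i).Adj (vv n hn (i.1 + 1)) (ww n hn (i.1 + 1))) : HasSpine S :=
  fun k x hx => by
    have hvx : vv n hn (k.1 + 1) = x := Fin.ext (by rw [val_vv hn (by omega) (by omega)]; omega)
    simpa only [ww_eq_rev_vv hn (i := k.1 + 1) (by omega) (by omega), hvx] using hc k

/-- Allowing `j = n + 1` covers the edge `v_1 w_n`, as `vv n hn (n + 1) = ww n hn n`. -/
lemma eq_of_adj_vv_one (hS : IsTwistedPartition S) (hsp : HasSpine S) (hn : 0 < n) (k : Fin n)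
    {j j' : ℕ} (hj : 2 ≤ j) (hjn : j ≤ n + 1) (hj' : 2 ≤ j') (hjn' : j' ≤ n + 1)
    (h : (S k).Adj (vv n hn 1) (vv n hn j)) (h' : (S k).Adj (vv n hn 1) (vv n hn j')) :
    j = j' := by
  have hv : ∀ {i}, 1 ≤ i → i ≤ n + 1 → (vv n hn i).val = i - 1 :=
    fun hi hin => val_vv hn hi (by omega)
  have hu : ∀ {i}, 2 ≤ i → i ≤ n + 1 → vv n hn 1 < vv n hn i ∧ (vv n hn i).val ≤ n :=
    fun hi hin => by rw [Fin.lt_def, hv le_rfl (by omega), hv (by omega) hin]; omega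
  have := congrArg Fin.val <|
    (existsUnique_adj_of_val_eq_zero hS hsp (hv le_rfl (by omega)) k).unique
      ⟨(hu hj hjn).1, (hu hj hjn).2, h⟩ ⟨(hu hj' hjn').1, (hu hj' hjn').2, h'⟩
  rw [hv (by omega) hjn, hv (by omega) hjn'] at this
  omega

lemma eq_of_adj_ww_one (hS : IsTwistedPartition S) (hsp : HasSpine S) (hn : 0 < n) (k : Fin n)
    {j j' : ℕ} (hj : 2 ≤ j) (hjn : j ≤ n + 1) (hj' : 2 ≤ j') (hjn' : j' ≤ n + 1)
    (h : (S k).Adj (ww n hn 1) (ww n hn j)) (h' : (S k).Adj (ww n hn 1) (ww n hn j')) :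
    j = j' := by
  rw [ww_eq_rev_vv hn le_rfl (by omega), ww_eq_rev_vv hn (by omega) (by omega)] at h h'
  exact eq_of_adj_vv_one hS.comap_rev hsp.comap_rev hn k hj hjn hj' hjn' h h'

end Vertices

theorem edges_at_v1_and_w1_in_distinct_trees_general
    (n : ℕ) (hn : 0 < n) (S : Fin n → SimpleGraph (Fin (2 * n)))
    (hS : IsTwistedPartition S)
    (hc : ∀ i : Fin n, (S i).Adj (vv n hn (i.1 + 1)) (ww n hn (i.1 + 1))) :
    (∀ k : Fin n, ∀ j j' : ℕ, 2 ≤ j → j ≤ n → 2 ≤ j' → j' ≤ n →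
      (S k).Adj (vv n hn 1) (vv n hn j) → (S k).Adj (vv n hn 1) (vv n hn j') →
      j = j') ∧
    (∀ k : Fin n, ∀ j : ℕ, 2 ≤ j → j ≤ n →
      (S k).Adj (vv n hn 1) (vv n hn j) →
      ¬ (S k).Adj (vv n hn 1) (ww n hn n)) ∧
    (∀ k : Fin n, ∀ j j' : ℕ, 2 ≤ j → j ≤ n → 2 ≤ j' → j' ≤ n →
      (S k).Adj (ww n hn 1) (ww n hn j) → (S k).Adj (ww n hn 1) (ww n hn j') →
      j = j') ∧
    (∀ k : Fin n, ∀ j : ℕ, 2 ≤ j → j ≤ n →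
      (S k).Adj (ww n hn 1) (ww n hn j) →
      ¬ (S k).Adj (ww n hn 1) (vv n hn n)) := by
  have hsp := hasSpine_of_adj_vv_ww hn hc
  have hwn : ww n hn n = vv n hn (n + 1) :=
    Fin.ext (by rw [val_ww hn (by omega) (by omega), val_vv hn (by omega) (by omega)]; omega)
  have hvn : vv n hn n = ww n hn (n + 1) :=
    Fin.ext (by rw [val_ww hn (by omega) (by omega), val_vv hn (by omega) (by omega)]; omega)
  refine ⟨fun k j j' hj hjn hj' hjn' => eq_of_adj_vv_one hS hsp hn k hj (by omega) hj' (by omega),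
    fun k j hj hjn h h' => ?_,
    fun k j j' hj hjn hj' hjn' => eq_of_adj_ww_one hS hsp hn k hj (by omega) hj' (by omega),
    fun k j hj hjn h h' => ?_⟩
  · have := eq_of_adj_vv_one hS hsp hn k hj (by omega) (by omega) le_rfl h (hwn ▸ h')
    omega
  · have := eq_of_adj_ww_one hS hsp hn k hj (by omega) (by omega) le_rfl h (hvn ▸ h')
    omega

/-- In any partition of `T_{2n}` into plane spanning trees with `v_i w_i ∈ E(S_i)`,
the `n` edges `v_1 v_2, ..., v_1 v_n, v_1 w_n` lie in `n` distinct trees, and the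
`n` edges `w_1 w_2, ..., w_1 w_n, w_1 v_n` lie in `n` distinct trees. -/
theorem edges_at_v1_and_w1_in_distinct_trees
    (n : ℕ) (hn : 0 < n) (hn2 : 2 ≤ n) (S : Fin n → SimpleGraph (Fin (2 * n)))
    (hS : IsTwistedPartition S)
    (hc : ∀ i : Fin n, (S i).Adj (vv n hn (i.1 + 1)) (ww n hn (i.1 + 1))) :
    (∀ k : Fin n, ∀ j j' : ℕ, 2 ≤ j → j ≤ n → 2 ≤ j' → j' ≤ n →
      (S k).Adj (vv n hn 1) (vv n hn j) → (S k).Adj (vv n hn 1) (vv n hn j') →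
      j = j') ∧
    (∀ k : Fin n, ∀ j : ℕ, 2 ≤ j → j ≤ n →
      (S k).Adj (vv n hn 1) (vv n hn j) →
      ¬ (S k).Adj (vv n hn 1) (ww n hn n)) ∧
    (∀ k : Fin n, ∀ j j' : ℕ, 2 ≤ j → j ≤ n → 2 ≤ j' → j' ≤ n →
      (S k).Adj (ww n hn 1) (ww n hn j) → (S k).Adj (ww n hn 1) (ww n hn j') →
      j = j') ∧
    (∀ k : Fin n, ∀ j : ℕ, 2 ≤ j → j ≤ n →
      (S k).Adj (ww n hn 1) (ww n hn j) →
      ¬ (S k).Adj (ww n hn 1) (vv n hn n)) :=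
  edges_at_v1_and_w1_in_distinct_trees_general n hn S hS hc
end

section
/- For n ≥ 3, there is no partition of the complete twisted graph T_{2n} into n plane spanning paths. -/
open SimpleGraph

/-! The path containing the edge `v₁w₁` between the first and the last vertex cannot be
spanning: every edge avoiding both endpoints of `v₁w₁` crosses it, so all edges of that path
are incident to `v₁` or `w₁`, which leaves room for at most `2 + 2 = 4` edges, whereas a
spanning path of `T_{2n}` has `2n - 1 ≥ 5` edges. -/

lemma cross_of_mem_Ioo {m : ℕ} {a b u v : Fin m} (hu : u ∈ Set.Ioo a b) (hv : v ∈ Set.Ioo a b)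
    (huv : u ≠ v) : Cross s(a, b) s(u, v) := by
  have hab : a < b := hu.1.trans hu.2
  rcases huv.lt_or_gt with h | h
  · exact ⟨a, b, u, v, hab, h, rfl, rfl, Or.inl ⟨hu.1, hv.2⟩⟩
  · exact ⟨a, b, v, u, hab, h, rfl, Sym2.eq_swap, Or.inl ⟨hv.1, hu.2⟩⟩

lemma IsPlane.not_mem_Ioo_of_adj {m : ℕ} {G : SimpleGraph (Fin m)} (hG : IsPlane G)
    {a b u v : Fin m} (hab : G.Adj a b) (huv : G.Adj u v) :
    u ∉ Set.Ioo a b ∨ v ∉ Set.Ioo a b := by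
  by_contra! h
  exact hG _ hab _ huv (cross_of_mem_Ioo h.1 h.2 huv.ne)

lemma IsPlane.adj_bot_or_top {m : ℕ} [NeZero m] {G : SimpleGraph (Fin m)} (hG : IsPlane G)
    (h : G.Adj ⊥ ⊤) {u v : Fin m} (huv : G.Adj u v) : u = ⊥ ∨ u = ⊤ ∨ v = ⊥ ∨ v = ⊤ := by
  have mem_Ioo {x : Fin m} (hb : x ≠ ⊥) (ht : x ≠ ⊤) : x ∈ Set.Ioo ⊥ ⊤ :=
    ⟨bot_lt_iff_ne_bot.mpr hb, lt_top_iff_ne_top.mpr ht⟩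
  by_contra! hne
  rcases hG.not_mem_Ioo_of_adj h huv with hu | hv
  · exact hu (mem_Ioo hne.1 hne.2.1)
  · exact hv (mem_Ioo hne.2.2.1 hne.2.2.2)

namespace SimpleGraph

lemma card_edgeFinset_le_degree_add_degree {V : Type*} [Fintype V] [DecidableEq V]
    {G : SimpleGraph V} [DecidableRel G.Adj] {a b : V}
    (h : ∀ u v, G.Adj u v → u = a ∨ u = b ∨ v = a ∨ v = b) :
    G.edgeFinset.card ≤ G.degree a + G.degree b := by
  have hsub : G.edgeFinset ⊆ G.incidenceFinset a ∪ G.incidenceFinset b := by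
    intro e he
    induction e using Sym2.ind with
    | _ u v =>
      rw [mem_edgeFinset, mem_edgeSet] at he
      simp only [Finset.mem_union, mem_incidenceFinset, mk'_mem_incidenceSet_iff, he, true_and]
      rcases h u v he with rfl | rfl | rfl | rfl <;> simp
  calc G.edgeFinset.card ≤ (G.incidenceFinset a ∪ G.incidenceFinset b).card :=
        Finset.card_le_card hsub
    _ ≤ (G.incidenceFinset a).card + (G.incidenceFinset b).card := Finset.card_union_le _ _
    _ = G.degree a + G.degree b := by rw [card_incidenceFinset_eq_degree,
        card_incidenceFinset_eq_degree]

lemma IsTree.le_five_of_isPlane {m : ℕ} [NeZero m] {G : SimpleGraph (Fin m)}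
    (hT : G.IsTree) (hP : IsPlane G) (hdeg : ∀ u, (G.neighborSet u).ncard ≤ 2)
    (h : G.Adj ⊥ ⊤) : m ≤ 5 := by
  classical
  have hdeg' (u : Fin m) : G.degree u ≤ 2 := by
    rw [← card_neighborSet_eq_degree, ← Nat.card_eq_fintype_card, Nat.card_coe_set_eq]
    exact hdeg u
  have hedges := card_edgeFinset_le_degree_add_degree fun _ _ => hP.adj_bot_or_top h
  have htree := hT.card_edgeFinset
  rw [Fintype.card_fin] at htree
  have := hdeg' ⊥
  have := hdeg' ⊤
  have := NeZero.pos m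
  omega

end SimpleGraph

/-- For `n ≥ 3` there is no partition of the complete twisted graph `T_{2n}` into
`n` plane spanning paths (spanning trees of maximum degree at most `2`). -/
theorem no_partition_into_plane_spanning_paths (n : ℕ) (hn : 3 ≤ n) :
    ¬ ∃ S : Fin n → SimpleGraph (Fin (2 * n)), IsTwistedPartition S ∧
      ∀ i : Fin n, ∀ u : Fin (2 * n), ((S i).neighborSet u).ncard ≤ 2 := by
  rintro ⟨S, ⟨hS, hcover⟩, hdeg⟩
  have : NeZero (2 * n) := ⟨by omega⟩
  have : Nontrivial (Fin (2 * n)) := Fin.nontrivial_iff_two_le.mpr (by omega)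
  obtain ⟨i, hi, -⟩ := hcover ⊥ ⊤ bot_ne_top
  have hle := (hS i).1.le_five_of_isPlane (hS i).2 (hdeg i) hi
  omega
end

section
/- For every positive integer n, the complete twisted graph T_{2n} admits at least one partition into n plane spanning trees; for instance the n balanced double stars A'_1,...,A'_n, where A'_i has center edge v_iw_i, v_i is adjacent to w_{i+1},...,w_n and to v_1,...,v_{i−1}, and w_i is adjacent to v_{i+1},...,v_n and to w_1,...,w_{i−1}, are pairwise edge-disjoint plane spanning trees partitioning all edges of T_{2n}. -/
open SimpleGraph

/-- The spanning balanced double star `A_k` of `T_{2n}` with center edge `v_n w_n`,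
in which `v_n` is adjacent to `v_1, ..., v_{n-k}` and `w_n, w_{n-1}, ..., w_{n-k+1}`,
and `w_n` is adjacent to `w_1, ..., w_{n-k}` and `v_n, v_{n-1}, ..., v_{n-k+1}`. -/
def Ak (n : ℕ) (hn : 0 < n) (k : ℕ) : SimpleGraph (Fin (2 * n)) :=
  SimpleGraph.fromEdgeSet
    ({s(vv n hn n, ww n hn n)} ∪
      {e | ∃ j, 1 ≤ j ∧ j ≤ n - k ∧
        (e = s(vv n hn n, vv n hn j) ∨ e = s(ww n hn n, ww n hn j))} ∪
      {e | ∃ j, n - k + 1 ≤ j ∧ j ≤ n - 1 ∧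
        (e = s(vv n hn n, ww n hn j) ∨ e = s(ww n hn n, vv n hn j))})

/-- The spanning balanced double star `A'_i` of `T_{2n}` with center edge `v_i w_i`,
in which `v_i` is adjacent to `w_{i+1}, ..., w_n` and `v_1, ..., v_{i-1}`, and
`w_i` is adjacent to `v_{i+1}, ..., v_n` and `w_1, ..., w_{i-1}`. -/
def A' (n : ℕ) (hn : 0 < n) (i : ℕ) : SimpleGraph (Fin (2 * n)) :=
  SimpleGraph.fromEdgeSet
    ({s(vv n hn i, ww n hn i)} ∪
      {e | ∃ j, i + 1 ≤ j ∧ j ≤ n ∧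
        (e = s(vv n hn i, ww n hn j) ∨ e = s(ww n hn i, vv n hn j))} ∪
      {e | ∃ j, 1 ≤ j ∧ j ≤ i - 1 ∧
        (e = s(vv n hn i, vv n hn j) ∨ e = s(ww n hn i, ww n hn j))})

/-- description of edges of `A'` as a disjunction over the attached endpoint. -/
def DD (n a x y : ℕ) : Prop :=
  (x = a ∧ (y < a ∨ (n ≤ y ∧ y + a + 2 ≤ 2*n) ∨ y = 2*n-1-a)) ∨
  (x = 2*n-1-a ∧ ((a < y ∧ y < n) ∨ (2*n ≤ y + a ∧ y < 2*n)))

lemma vv_val (n : ℕ) (hn : 0 < n) (j : ℕ) (h1 : 1 ≤ j) (h2 : j ≤ 2*n) :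
    (vv n hn j).1 = j - 1 := Nat.mod_eq_of_lt (by omega)

lemma ww_val (n : ℕ) (hn : 0 < n) (j : ℕ) (h1 : 1 ≤ j) (h2 : j ≤ 2*n) :
    (ww n hn j).1 = 2*n - j := Nat.mod_eq_of_lt (by omega)

lemma eq_vv {n : ℕ} {hn : 0 < n} {j : ℕ} (u : Fin (2*n)) (h1 : 1 ≤ j) (h2 : j ≤ 2*n)
    (h : u.1 = j - 1) : u = vv n hn j := Fin.ext (by rw [vv_val n hn j h1 h2, h])

lemma eq_ww {n : ℕ} {hn : 0 < n} {j : ℕ} (u : Fin (2*n)) (h1 : 1 ≤ j) (h2 : j ≤ 2*n)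
    (h : u.1 = 2*n - j) : u = ww n hn j := Fin.ext (by rw [ww_val n hn j h1 h2, h])

lemma adj_of_DD {n : ℕ} {hn : 0 < n} {a : ℕ} (ha : a < n) {u v : Fin (2*n)}
    (h : DD n a u.1 v.1) : (A' n hn (a+1)).Adj u v := by
  have hu := u.isLt
  have hv := v.isLt
  rw [A', fromEdgeSet_adj]
  constructor
  · simp only [Set.mem_union, Set.mem_singleton_iff, Set.mem_setOf_eq]
    rcases h with ⟨hx, hy | hy | hy⟩ | ⟨hx, hy | hy⟩
    · refine Or.inr ⟨v.1 + 1, by omega, by omega, Or.inl ?_⟩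
      have h1 : u = vv n hn (a+1) := eq_vv u (by omega) (by omega) (by omega)
      have h2 : v = vv n hn (v.1+1) := eq_vv v (by omega) (by omega) (by omega)
      exact congrArg₂ (fun x y => s(x, y)) h1 h2
    · refine Or.inl (Or.inr ⟨2*n - v.1, by omega, by omega, Or.inl ?_⟩)
      have h1 : u = vv n hn (a+1) := eq_vv u (by omega) (by omega) (by omega)
      have h2 : v = ww n hn (2*n - v.1) := eq_ww v (by omega) (by omega) (by omega)
      exact congrArg₂ (fun x y => s(x, y)) h1 h2
    · refine Or.inl (Or.inl ?_)
      have h1 : u = vv n hn (a+1) := eq_vv u (by omega) (by omega) (by omega)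
      have h2 : v = ww n hn (a+1) := eq_ww v (by omega) (by omega) (by omega)
      exact congrArg₂ (fun x y => s(x, y)) h1 h2
    · refine Or.inl (Or.inr ⟨v.1 + 1, by omega, by omega, Or.inr ?_⟩)
      have h1 : u = ww n hn (a+1) := eq_ww u (by omega) (by omega) (by omega)
      have h2 : v = vv n hn (v.1+1) := eq_vv v (by omega) (by omega) (by omega)
      exact congrArg₂ (fun x y => s(x, y)) h1 h2
    · refine Or.inr ⟨2*n - v.1, by omega, by omega, Or.inr ?_⟩
      have h1 : u = ww n hn (a+1) := eq_ww u (by omega) (by omega) (by omega)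
      have h2 : v = ww n hn (2*n - v.1) := eq_ww v (by omega) (by omega) (by omega)
      exact congrArg₂ (fun x y => s(x, y)) h1 h2
  · intro h'
    apply_fun Fin.val at h'
    rcases h with ⟨hx, hy | hy | hy⟩ | ⟨hx, hy | hy⟩ <;> omega

lemma adj_iff {n : ℕ} {hn : 0 < n} {a : ℕ} (ha : a < n) (u v : Fin (2*n)) :
    (A' n hn (a+1)).Adj u v ↔ (DD n a u.1 v.1 ∨ DD n a v.1 u.1) := by
  have hu := u.isLt
  have hv := v.isLt
  constructor
  · rw [A', fromEdgeSet_adj]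
    rintro ⟨hmem, -⟩
    simp only [Set.mem_union, Set.mem_singleton_iff, Set.mem_setOf_eq] at hmem
    have e1 := vv_val n hn (a+1) (by omega) (by omega)
    have e2 := ww_val n hn (a+1) (by omega) (by omega)
    rcases hmem with (hc | ⟨j, hj1, hj2, hc⟩) | ⟨j, hj1, hj2, hc⟩
    · simp only [Sym2.eq_iff, Fin.ext_iff] at hc
      simp only [DD]; omega
    · have e3 := vv_val n hn j (by omega) (by omega)
      have e4 := ww_val n hn j (by omega) (by omega)
      simp only [Sym2.eq_iff, Fin.ext_iff] at hc
      simp only [DD]; omega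
    · have e3 := vv_val n hn j (by omega) (by omega)
      have e4 := ww_val n hn j (by omega) (by omega)
      simp only [Sym2.eq_iff, Fin.ext_iff] at hc
      simp only [DD]; omega
  · rintro (h | h)
    · exact adj_of_DD ha h
    · exact (adj_of_DD ha h).symm

lemma acyclic_of_parent {V : Type*} (G : SimpleGraph V) (h : V → ℕ)
    (hne : ∀ u v, G.Adj u v → h u ≠ h v)
    (hpar : ∀ u v w, G.Adj u v → G.Adj u w → h v < h u → h w < h u → v = w) :
    G.IsAcyclic := by
  classical
  intro v c hc
  obtain ⟨u, hu, hmax⟩ := Finset.exists_max_image c.support.toFinset h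
    ⟨v, by simp⟩
  rw [List.mem_toFinset] at hu
  have hmax' : ∀ x ∈ (c.rotate u hu).support, h x ≤ h u := by
    intro x hx
    rcases (Walk.mem_support_iff _).1 hx with rfl | hx
    · exact le_refl _
    · refine hmax x (List.mem_toFinset.2 ?_)
      have := (Walk.support_rotate c u hu).mem_iff (a := x)
      exact (Walk.mem_support_iff _).2 (Or.inr (this.1 hx))
  have hc' := hc.rotate hu
  set c' := c.rotate u hu with hc'def
  clear_value c'
  cases c' with
  | nil => exact Walk.IsCycle.not_of_nil hc'
  | @cons _ u₁ _ hadj q =>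
    cases q with
    | nil => exact G.irrefl hadj
    | @cons _ u₂ _ hadj₂ q₂ =>
      obtain ⟨x, r, hadj', hqeq⟩ := Walk.exists_cons_eq_concat hadj₂ q₂
      rw [Walk.cons_isCycle_iff] at hc'
      have hq : (Walk.cons hadj₂ q₂).IsPath := hc'.1
      have hxsup : x ∈ (Walk.cons hadj (Walk.cons hadj₂ q₂)).support := by
        rw [hqeq]
        simp [Walk.support_concat]
      have hu1sup : u₁ ∈ (Walk.cons hadj (Walk.cons hadj₂ q₂)).support := by simp
      have h1 : h u₁ < h u := lt_of_le_of_ne (hmax' _ hu1sup) (hne _ _ hadj).symm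
      have h2 : h x < h u := lt_of_le_of_ne (hmax' _ hxsup) (hne _ _ hadj')
      have hux : u₁ = x := hpar u u₁ x hadj hadj'.symm h1 h2
      subst hux
      have hrp : r.IsPath := by
        rw [hqeq, Walk.concat_eq_append] at hq
        exact hq.of_append_left
      have hrnil : r = Walk.nil := by
        have := Path.loop_eq ⟨r, hrp⟩
        simpa [Path.nil] using congrArg Subtype.val this
      subst hrnil
      rw [Walk.concat_nil] at hqeq
      apply hc'.2
      rw [hqeq]
      simp [Sym2.eq_swap]

lemma exists_unique_star {n : ℕ} {hn : 0 < n} (u v : Fin (2*n)) (huv : u ≠ v) :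
    ∃! i : Fin n, (A' n hn (i.1 + 1)).Adj u v := by
  have hu := u.isLt
  have hv := v.isLt
  have hxy : u.1 ≠ v.1 := fun h => huv (Fin.ext h)
  set x := u.1 with hxdef
  set y := v.1 with hydef
  have hex : ∃ a : ℕ, a < n ∧ (DD n a x y ∨ DD n a y x) := by
    refine ⟨if x < n ∧ y < n then max x y
      else if n ≤ x ∧ n ≤ y then 2*n - 1 - min x y
      else if x + y ≤ 2*n - 1 then min x y
      else 2*n - 1 - max x y, ?_, ?_⟩
    · split_ifs <;> omega
    · simp only [DD, Fin.val_mk]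
      split_ifs <;> omega
  obtain ⟨a, ha, hD⟩ := hex
  refine ⟨⟨a, ha⟩, (adj_iff ha u v).2 hD, ?_⟩
  rintro ⟨b, hb⟩ hadj
  have hD' := (adj_iff hb u v).1 hadj
  apply Fin.ext
  simp only [DD] at hD hD'
  simp only []
  omega

lemma plane_star {n : ℕ} {hn : 0 < n} {a : ℕ} (ha : a < n) : IsPlane (A' n hn (a+1)) := by
  intro e he f hf
  revert he hf
  induction e using Sym2.ind with
  | _ u1 v1 =>
    induction f using Sym2.ind with
    | _ u2 v2 =>
      intro he hf hcross
      rw [SimpleGraph.mem_edgeSet] at he hf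
      have hD1 := (adj_iff ha u1 v1).1 he
      have hD2 := (adj_iff ha u2 v2).1 hf
      obtain ⟨p, q, r, s, hpq, hrs, heq, hfq, hor⟩ := hcross
      simp only [Sym2.eq_iff, Fin.ext_iff] at heq hfq
      simp only [Fin.lt_def] at hpq hrs hor
      have h1 := u1.isLt; have h2 := v1.isLt
      have h3 := u2.isLt; have h4 := v2.isLt
      simp only [DD] at hD1 hD2
      omega

lemma connected_star {n : ℕ} {hn : 0 < n} {a : ℕ} (ha : a < n) :
    (A' n hn (a+1)).Connected := by
  have hP : (a : ℕ) < 2*n := by omega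
  have hQ : (2*n - 1 - a) < 2*n := by omega
  obtain ⟨P, hPv⟩ : ∃ P : Fin (2*n), P.1 = a := ⟨⟨a, hP⟩, rfl⟩
  obtain ⟨Q, hQv⟩ : ∃ Q : Fin (2*n), Q.1 = 2*n - 1 - a := ⟨⟨2*n - 1 - a, hQ⟩, rfl⟩
  have hPQ : (A' n hn (a+1)).Adj P Q := by
    apply (adj_iff ha P Q).2
    left
    simp only [DD, Fin.val_mk]
    omega
  have key : ∀ x : Fin (2*n), (A' n hn (a+1)).Reachable x P := by
    intro x
    have hx := x.isLt
    rcases eq_or_ne x P with rfl | hxP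
    · exact Reachable.refl _
    rcases eq_or_ne x Q with rfl | hxQ
    · exact (hPQ.symm).reachable
    have hxP' : x.1 ≠ a := fun h => hxP (Fin.ext (by omega))
    have hxQ' : x.1 ≠ 2*n - 1 - a := fun h => hxQ (Fin.ext (by omega))
    by_cases hcase : x.1 < a ∨ (n ≤ x.1 ∧ x.1 + a + 2 ≤ 2*n)
    · refine Adj.reachable ?_
      apply (adj_iff ha x P).2
      right
      simp only [DD, Fin.val_mk]
      omega
    · have hadj : (A' n hn (a+1)).Adj x Q := by
        apply (adj_iff ha x Q).2
        right
        simp only [DD, Fin.val_mk]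
        omega
      exact (hadj.reachable).trans hPQ.symm.reachable
  haveI : Nonempty (Fin (2*n)) := ⟨P⟩
  exact ⟨fun x y => (key x).trans (key y).symm⟩

lemma acyclic_star {n : ℕ} {hn : 0 < n} {a : ℕ} (ha : a < n) :
    (A' n hn (a+1)).IsAcyclic := by
  apply acyclic_of_parent _ (fun x => if x.1 = a then 0 else if x.1 = 2*n - 1 - a then 1 else 2)
  · intro u v hadj
    have hD := (adj_iff ha u v).1 hadj
    have hu := u.isLt; have hv := v.isLt
    simp only [DD] at hD
    split_ifs <;> omega
  · intro u v w hv hw hlv hlw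
    have hDv := (adj_iff ha u v).1 hv
    have hDw := (adj_iff ha u w).1 hw
    have h1 := u.isLt; have h2 := v.isLt; have h3 := w.isLt
    simp only [DD] at hDv hDw
    split_ifs at hlv hlw <;> apply Fin.ext <;> omega

/-- For every positive `n`, the balanced double stars `A'_1, ..., A'_n` form a
partition of the complete twisted graph `T_{2n}` into plane spanning trees; in
particular such a partition always exists. -/
theorem A'_family_is_partition (n : ℕ) (hn : 0 < n) :
    IsTwistedPartition (fun i : Fin n => A' n hn (i.1 + 1)) := by
  constructor
  · intro i
    exact ⟨(isTree_iff _).2 ⟨connected_star i.2, acyclic_star i.2⟩, plane_star i.2⟩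
  · intro u v huv
    exact exists_unique_star u v huv
end
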